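/- arXiv:1112.5554 — 4 statements merged into one kernel-verified Lean document; each statement's English description precedes it below -/
import Mathlib

section
/- Let φ:(0,∞)→(0,∞) be non-decreasing, positive, continuous with δ_φ < 2 and set m = 2 - δ_φ. Then for every t > 0: (t^{δ_φ}/φ(t))·ℓ_m(t) ≤ ln_φ(t) ≤ (1/φ(1))·ℓ_m(t), and for all r ∈ ℝ: exp_φ(r) ≥ e_m(φ(1)·r). Consequently, if δ_φ > 1 then L_φ < ∞, and if δ_φ ≥ 1 then l_φ = -∞. -/
/-!
The lower bound `δ ≤ s / φ(s) · limsup (φ(s+t) - φ(s)) / t` says that the upper right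
Dini derivative of `φ` is at least `δ φ(s) / s`. A fencing argument against `c x ^ δ'`
(for `δ' < δ`, then letting `δ' → δ`) shows that `x ^ δ / φ(x)` is non-increasing. Since
`1 / φ(x) = x ^ (-δ) · (x ^ δ / φ(x))` and `∫₁ᵗ x ^ (-δ) dx = ℓ_{2-δ}(t)`, freezing the
antitone factor at the endpoints `t` and `1` gives the two bounds on `ln_φ`. The bound on
`exp_φ` is the upper bound read through the definition of `exp_φ`; for `δ > 1` the function
`1 / φ` is dominated by an integrable power at infinity, and for `δ ≥ 1` we have
`ℓ_{2-δ}(t) → -∞` as `t → 0⁺`.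
-/
open Set MeasureTheory Filter ENNReal

noncomputable def lnphi (φ : ℝ → ℝ) (t : ℝ) : ℝ := ∫ s in (1:ℝ)..t, 1 / φ s

noncomputable def philimsup (φ : ℝ → ℝ) (s : ℝ) : ℝ :=
  Filter.limsup (fun t => (φ (s + t) - φ s) / t) (nhdsWithin 0 (Set.Ioi 0))

def thetaSet (φ : ℝ → ℝ) : Set ℝ :=
  {x | ∃ s : ℝ, 0 < s ∧ x = s / φ s * philimsup φ s}

/-- The extended φ-exponential `exp_φ : ℝ → [0,∞]`: equal to `0` for `τ ≤ l_φ`,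
to the inverse of `ln_φ` on `(l_φ, L_φ)`, and to `∞` for `τ ≥ L_φ`. -/
noncomputable def expphi (φ : ℝ → ℝ) (τ : ℝ) : ℝ≥0∞ :=
  sSup {x : ℝ≥0∞ | ∃ t : ℝ, 0 < t ∧ lnphi φ t ≤ τ ∧ x = ENNReal.ofReal t}

/-- The m-exponential `e_m(τ) = [1+(m-1)τ]₊^{1/(m-1)}` (with `0^a = ∞` for `a < 0`),
and `e_1 = exp`. -/
noncomputable def expm (m τ : ℝ) : ℝ≥0∞ :=
  if m = 1 then ENNReal.ofReal (Real.exp τ)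
  else if 1 < m then ENNReal.ofReal ((max (1 + (m - 1) * τ) 0) ^ (1 / (m - 1)))
  else if 1 + (m - 1) * τ ≤ 0 then ⊤
  else ENNReal.ofReal ((1 + (m - 1) * τ) ^ (1 / (m - 1)))
/-- The m-logarithm `ℓ_m`. -/
noncomputable def ellm (m t : ℝ) : ℝ :=
  if m = 1 then Real.log t else (t ^ (m - 1) - 1) / (m - 1)

open Topology

section Growth

variable {φ : ℝ → ℝ}

theorem frequently_lt_slope_of_lt_philimsup {s c : ℝ} (hmono : MonotoneOn φ (Ici s))
    (hc : c < philimsup φ s) : ∃ᶠ z in 𝓝[>] s, c < slope φ s z := by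
  have hnonneg : ∀ᶠ t in 𝓝[>] (0 : ℝ), 0 ≤ (φ (s + t) - φ s) / t := by
    filter_upwards [self_mem_nhdsWithin] with t (ht : 0 < t)
    have hφ : φ s ≤ φ (s + t) := hmono (mem_Ici.2 le_rfl) (mem_Ici.2 (by linarith)) (by linarith)
    exact div_nonneg (sub_nonneg.2 hφ) ht.le
  have := frequently_lt_of_lt_limsup (isCoboundedUnder_le_of_eventually_le _ hnonneg) hc
  rw [← add_zero s, ← Filter.map_add_left_nhdsGT, frequently_map]
  simpa [slope_def_field] using this

theorem le_philimsup_of_mem_lowerBounds {δ s : ℝ} (hδ : δ ∈ lowerBounds (thetaSet φ))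
    (hs : 0 < s) (hφs : 0 < φ s) : δ * φ s / s ≤ philimsup φ s := by
  have hθ : δ ≤ s / φ s * philimsup φ s := hδ ⟨s, hs, rfl⟩
  rw [div_le_iff₀ hs]
  rw [div_mul_eq_mul_div, le_div_iff₀ hφs] at hθ
  linarith

variable (hpos : ∀ s > (0 : ℝ), 0 < φ s) (hmono : MonotoneOn φ (Ioi 0))
  (hcont : ContinuousOn φ (Ioi 0))
include hpos hmono hcont

/-- Fence `φ` from below by `c x ^ δ'`: at a contact point the fence has slope `δ' φ(x) / x`,
strictly less than the bound `δ φ(x) / x` on the upper right Dini derivative of `φ`. -/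
theorem rpow_div_le_rpow_div_of_lt {δ δ' a b : ℝ} (hδ : δ ∈ lowerBounds (thetaSet φ))
    (hδ' : δ' < δ) (ha : 0 < a) (hab : a ≤ b) : b ^ δ' / φ b ≤ a ^ δ' / φ a := by
  have hIcc : Icc a b ⊆ Ioi 0 := fun x hx => ha.trans_le hx.1
  have hIco : ∀ x ∈ Ico a b, 0 < x := fun x hx => ha.trans_le hx.1
  set c := φ a / a ^ δ'
  have hdini : ∀ x ∈ Ico a b, ∀ r, -(δ * φ x / x) < r →
      ∃ᶠ z in 𝓝[>] x, slope (fun y => -φ y) x z < r := by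
    intro x hx r hr
    have hx0 := hIco x hx
    have hlt : -r < philimsup φ x :=
      (neg_lt.1 hr).trans_le (le_philimsup_of_mem_lowerBounds hδ hx0 (hpos x hx0))
    refine (frequently_lt_slope_of_lt_philimsup (hmono.mono (Ici_subset_Ioi.2 hx0)) hlt).mono ?_
    intro z hz
    rw [slope_neg]
    linarith
  have hcontact : ∀ x ∈ Ico a b, -φ x = -(c * x ^ δ') →
      -(δ * φ x / x) < -(c * (δ' * x ^ (δ' - 1))) := by
    intro x hx hφx
    have hx0 := hIco x hx
    have hslope : c * (δ' * x ^ (δ' - 1)) = δ' * (φ x / x) := by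
      rw [Real.rpow_sub_one hx0.ne', neg_inj.1 hφx]; ring
    rw [hslope, neg_lt_neg_iff, mul_div_assoc]
    exact mul_lt_mul_of_pos_right hδ' (div_pos (hpos x hx0) hx0)
  have hfence := image_le_of_liminf_slope_right_lt_deriv_boundary' (hcont.mono hIcc).neg hdini
    (by simp [div_mul_cancel₀ _ (Real.rpow_pos_of_pos ha δ').ne'])
    (continuousOn_const.mul (continuousOn_id.rpow_const fun x hx => Or.inl (hIcc hx).ne')).neg
    (fun x hx => ((Real.hasDerivAt_rpow_const (Or.inl (hIco x hx).ne')).const_mul c).neg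
      |>.hasDerivWithinAt)
    hcontact (right_mem_Icc.2 hab)
  rw [div_le_div_iff₀ (hpos b (ha.trans_le hab)) (hpos a ha)]
  calc b ^ δ' * φ a = a ^ δ' * (c * b ^ δ') := by simp only [c]; field_simp
    _ ≤ a ^ δ' * φ b := by gcongr; exact neg_le_neg_iff.1 hfence

theorem antitoneOn_rpow_div {δ : ℝ} (hδ : δ ∈ lowerBounds (thetaSet φ)) :
    AntitoneOn (fun x => x ^ δ / φ x) (Ioi 0) := by
  intro a (ha : 0 < a) b (hb : 0 < b) hab
  have hcts : ∀ x : ℝ, 0 < x → ContinuousAt (fun p => x ^ p / φ x) δ := fun x hx =>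
    (Real.continuousAt_const_rpow hx.ne').div_const _
  exact le_of_tendsto_of_tendsto ((hcts b hb).tendsto.mono_left nhdsWithin_le_nhds)
    ((hcts a ha).tendsto.mono_left nhdsWithin_le_nhds)
    (eventually_nhdsWithin_of_forall (s := Iio δ) fun δ' hδ' =>
      rpow_div_le_rpow_div_of_lt hpos hmono hcont hδ hδ' ha hab)

end Growth

namespace intervalIntegral

variable {u w : ℝ → ℝ} {a b : ℝ}

theorem integral_mul_le_mul_integral_of_antitoneOn (hu : AntitoneOn u (uIcc a b))
    (hw : ∀ x ∈ uIcc a b, 0 ≤ w x) (huw : IntervalIntegrable (fun x => u x * w x) volume a b)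
    (hwi : IntervalIntegrable w volume a b) :
    ∫ x in a..b, u x * w x ≤ u a * ∫ x in a..b, w x := by
  rw [← integral_const_mul]
  rcases le_total a b with hab | hba
  · refine integral_mono_on hab huw (hwi.const_mul _) fun x hx => ?_
    have hx' : x ∈ uIcc a b := by rwa [uIcc_of_le hab]
    exact mul_le_mul_of_nonneg_right (hu left_mem_uIcc hx' hx.1) (hw x hx')
  · rw [integral_symm b a, integral_symm b a, neg_le_neg_iff]
    refine integral_mono_on hba (hwi.symm.const_mul _) huw.symm fun x hx => ?_
    have hx' : x ∈ uIcc a b := by rwa [uIcc_of_ge hba]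
    exact mul_le_mul_of_nonneg_right (hu hx' left_mem_uIcc hx.2) (hw x hx')

theorem mul_integral_le_integral_mul_of_antitoneOn (hu : AntitoneOn u (uIcc a b))
    (hw : ∀ x ∈ uIcc a b, 0 ≤ w x) (huw : IntervalIntegrable (fun x => u x * w x) volume a b)
    (hwi : IntervalIntegrable w volume a b) :
    u b * ∫ x in a..b, w x ≤ ∫ x in a..b, u x * w x := by
  have := integral_mul_le_mul_integral_of_antitoneOn (by rwa [uIcc_comm])
    (by rwa [uIcc_comm]) huw.symm hwi.symm
  rw [integral_symm a b, integral_symm a b, mul_neg] at this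
  linarith

end intervalIntegral

theorem rpow_div_mul_rpow_neg {x : ℝ} (hx : 0 < x) (δ y : ℝ) :
    x ^ δ / y * x ^ (-δ) = 1 / y := by
  rw [div_mul_eq_mul_div, ← Real.rpow_add hx, add_neg_cancel, Real.rpow_zero]

theorem ellm_eq_integral_rpow (m : ℝ) {t : ℝ} (ht : 0 < t) :
    ellm m t = ∫ x in (1 : ℝ)..t, x ^ (m - 2) := by
  by_cases hm : m = 1
  · subst hm
    norm_num [ellm, Real.rpow_neg_one, integral_inv_of_pos one_pos ht]
  · have hr : m - 2 ≠ -1 := fun h => hm (by linarith)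
    rw [ellm, if_neg hm, integral_rpow (Or.inr ⟨hr, notMem_uIcc_of_lt one_pos ht⟩),
      Real.one_rpow, show m - 2 + 1 = m - 1 by ring]

theorem ellm_rpow_one_div_sub_one {m u : ℝ} (hm : m ≠ 1) (hu : 0 < u) :
    ellm m (u ^ (1 / (m - 1))) = (u - 1) / (m - 1) := by
  rw [ellm, if_neg hm, ← Real.rpow_mul hu.le, one_div_mul_cancel (sub_ne_zero.2 hm),
    Real.rpow_one]

theorem expm_le_of_forall_ellm_le {m τ : ℝ} {X : ℝ≥0∞}
    (h : ∀ t > 0, ellm m t ≤ τ → ENNReal.ofReal t ≤ X) : expm m τ ≤ X := by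
  have hroot (hm : m ≠ 1) (hu : 0 < 1 + (m - 1) * τ) :
      ENNReal.ofReal ((1 + (m - 1) * τ) ^ (1 / (m - 1))) ≤ X := by
    refine h _ (Real.rpow_pos_of_pos hu _) (le_of_eq ?_)
    rw [ellm_rpow_one_div_sub_one hm hu]
    field_simp [sub_ne_zero.2 hm]
    ring
  unfold expm
  split_ifs with h1 h2 h3
  · exact h _ (Real.exp_pos τ) (by rw [ellm, if_pos h1, Real.log_exp])
  · rcases le_or_gt (1 + (m - 1) * τ) 0 with hu | hu
    · rw [max_eq_right hu, Real.zero_rpow (one_div_ne_zero (by linarith))]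
      simp
    · rw [max_eq_left hu.le]
      exact hroot h1 hu
  · -- for `m < 1` the condition `ellm m t ≤ τ` holds for every `t > 0`
    refine top_le_iff.2 (ENNReal.eq_top_of_forall_nnreal_le fun r => ?_)
    have hr : (0 : ℝ) < r + 1 := by positivity
    have hell : ellm m (r + 1) ≤ τ := by
      rw [ellm, if_neg h1, div_le_iff_of_neg (sub_neg.2 ((not_lt.1 h2).lt_of_ne h1))]
      linarith [Real.rpow_pos_of_pos hr (m - 1)]
    calc (r : ℝ≥0∞) ≤ ENNReal.ofReal (r + 1) := by
          rw [← ENNReal.ofReal_coe_nnreal]; exact ENNReal.ofReal_le_ofReal (by linarith)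
      _ ≤ X := h _ hr hell
  · exact hroot h1 (not_le.1 h3)

theorem tendsto_ellm_nhdsGT_zero {m : ℝ} (hm : m ≤ 1) : Tendsto (ellm m) (𝓝[>] 0) atBot := by
  rcases hm.eq_or_lt with rfl | hm
  · exact Real.tendsto_log_nhdsGT_zero.congr fun t => by simp [ellm]
  · have hpow := tendsto_rpow_neg_nhdsGT_zero (sub_neg.2 hm)
    have := (tendsto_atTop_add_const_right _ (-1) hpow).atTop_mul_const_of_neg
      (inv_lt_zero.2 (sub_neg.2 hm))
    refine this.congr fun t => ?_
    rw [ellm, if_neg hm.ne]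
    ring

section Bounds

variable {φ : ℝ → ℝ} {δ : ℝ}

theorem lnphi_eq_integral_rpow_div_mul_rpow_neg {t : ℝ} (ht : 0 < t) :
    lnphi φ t = ∫ x in (1 : ℝ)..t, x ^ δ / φ x * x ^ (-δ) :=
  intervalIntegral.integral_congr fun x hx =>
    (rpow_div_mul_rpow_neg (lt_min one_pos ht |>.trans_le hx.1) δ (φ x)).symm

theorem rpow_div_mul_ellm_le_lnphi_le (hpos : ∀ s > (0 : ℝ), 0 < φ s)
    (hcont : ContinuousOn φ (Ioi 0)) (hanti : AntitoneOn (fun x => x ^ δ / φ x) (Ioi 0))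
    {t : ℝ} (ht : 0 < t) :
    t ^ δ / φ t * ellm (2 - δ) t ≤ lnphi φ t ∧ lnphi φ t ≤ 1 / φ 1 * ellm (2 - δ) t := by
  have hsub : uIcc 1 t ⊆ Ioi 0 := fun x hx => lt_min one_pos ht |>.trans_le hx.1
  have hw : ContinuousOn (fun x : ℝ => x ^ (-δ)) (uIcc 1 t) :=
    continuousOn_id.rpow_const fun x hx => Or.inl (hsub hx).ne'
  have hu : ContinuousOn (fun x : ℝ => x ^ δ / φ x) (uIcc 1 t) :=
    (continuousOn_id.rpow_const fun x hx => Or.inl (hsub hx).ne').div (hcont.mono hsub)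
      fun x hx => (hpos x (hsub hx)).ne'
  have hw0 : ∀ x ∈ uIcc 1 t, 0 ≤ x ^ (-δ) := fun x hx => (Real.rpow_pos_of_pos (hsub hx) _).le
  rw [ellm_eq_integral_rpow _ ht, show 2 - δ - 2 = -δ by ring,
    lnphi_eq_integral_rpow_div_mul_rpow_neg ht]
  constructor
  · exact intervalIntegral.mul_integral_le_integral_mul_of_antitoneOn (hanti.mono hsub) hw0
      (hu.mul hw).intervalIntegrable hw.intervalIntegrable
  · simpa using intervalIntegral.integral_mul_le_mul_integral_of_antitoneOn (hanti.mono hsub)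
      hw0 (hu.mul hw).intervalIntegrable hw.intervalIntegrable

theorem exists_tendsto_lnphi_atTop (hpos : ∀ s > (0 : ℝ), 0 < φ s)
    (hcont : ContinuousOn φ (Ioi 0)) (hanti : AntitoneOn (fun x => x ^ δ / φ x) (Ioi 0))
    (hδ : 1 < δ) : ∃ L, Tendsto (lnphi φ) atTop (𝓝 L) := by
  have hdom : IntegrableOn (fun x => 1 / φ 1 * x ^ (-δ)) (Ioi 1) :=
    (integrableOn_Ioi_rpow_of_lt (by linarith) one_pos).const_mul _
  have hmeas : AEStronglyMeasurable (fun x => 1 / φ x) (volume.restrict (Ioi 1)) :=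
    (continuousOn_const.div (hcont.mono (Ioi_subset_Ioi zero_le_one))
      fun x hx => (hpos x (zero_lt_one.trans hx)).ne').aestronglyMeasurable measurableSet_Ioi
  refine ⟨_, intervalIntegral_tendsto_integral_Ioi 1 (hdom.mono' hmeas ?_) tendsto_id⟩
  filter_upwards [ae_restrict_mem measurableSet_Ioi] with x (hx : 1 < x)
  have hx0 : 0 < x := zero_lt_one.trans hx
  calc ‖1 / φ x‖ = x ^ δ / φ x * x ^ (-δ) := by
        rw [rpow_div_mul_rpow_neg hx0, Real.norm_of_nonneg (one_div_pos.2 (hpos x hx0)).le]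
    _ ≤ 1 ^ δ / φ 1 * x ^ (-δ) :=
        mul_le_mul_of_nonneg_right (hanti (mem_Ioi.2 one_pos) (mem_Ioi.2 hx0) hx.le)
          (Real.rpow_nonneg hx0.le _)
    _ = 1 / φ 1 * x ^ (-δ) := by rw [Real.one_rpow]

end Bounds

theorem stmt5_general (φ : ℝ → ℝ)
    (hpos : ∀ s > (0:ℝ), 0 < φ s)
    (hmono : MonotoneOn φ (Ioi 0))
    (hcont : ContinuousOn φ (Ioi 0))
    (δ : ℝ) (hδ : IsGLB (thetaSet φ) δ) :
    (∀ t > (0:ℝ),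
      t ^ δ / φ t * ellm (2 - δ) t ≤ lnphi φ t ∧
        lnphi φ t ≤ 1 / φ 1 * ellm (2 - δ) t) ∧
    (∀ r : ℝ, expm (2 - δ) (φ 1 * r) ≤ expphi φ r) ∧
    (1 < δ → ∃ L : ℝ, Filter.Tendsto (lnphi φ) Filter.atTop (nhds L)) ∧
    (1 ≤ δ → Filter.Tendsto (lnphi φ) (nhdsWithin 0 (Set.Ioi 0)) Filter.atBot) := by
  have hφ1 : 0 < φ 1 := hpos 1 one_pos
  have hanti := antitoneOn_rpow_div hpos hmono hcont hδ.1
  have hbounds := fun t (ht : t > 0) => rpow_div_mul_ellm_le_lnphi_le hpos hcont hanti ht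
  refine ⟨hbounds, fun r => ?_, fun hδ1 => ?_, fun hδ1 => ?_⟩
  · refine expm_le_of_forall_ellm_le fun t ht hτ => le_sSup ⟨t, ht, ?_, rfl⟩
    calc lnphi φ t ≤ 1 / φ 1 * ellm (2 - δ) t := (hbounds t ht).2
      _ ≤ 1 / φ 1 * (φ 1 * r) := by gcongr
      _ = r := by field_simp
  · exact exists_tendsto_lnphi_atTop hpos hcont hanti hδ1
  · exact tendsto_atBot_mono' _ (eventually_nhdsWithin_of_forall fun t ht => (hbounds t ht).2)
      ((tendsto_ellm_nhdsGT_zero (by linarith)).const_mul_atBot (one_div_pos.2 hφ1))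

/-- For φ with δ_φ < 2 and m = 2 - δ_φ:
`(t^{δ_φ}/φ(t))·ℓ_m(t) ≤ ln_φ(t) ≤ (1/φ(1))·ℓ_m(t)` and `exp_φ(r) ≥ e_m(φ(1)r)`.
Consequently, if δ_φ > 1 then L_φ < ∞, and if δ_φ ≥ 1 then l_φ = -∞. -/
theorem stmt5 (φ : ℝ → ℝ)
    (hpos : ∀ s > (0:ℝ), 0 < φ s)
    (hmono : MonotoneOn φ (Ioi 0))
    (hcont : ContinuousOn φ (Ioi 0))
    (δ : ℝ) (hδ : IsGLB (thetaSet φ) δ) (hδ2 : δ < 2) :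
    (∀ t > (0:ℝ),
      t ^ δ / φ t * ellm (2 - δ) t ≤ lnphi φ t ∧
        lnphi φ t ≤ 1 / φ 1 * ellm (2 - δ) t) ∧
    (∀ r : ℝ, expm (2 - δ) (φ 1 * r) ≤ expphi φ r) ∧
    (1 < δ → ∃ L : ℝ, Filter.Tendsto (lnphi φ) Filter.atTop (nhds L)) ∧
    (1 ≤ δ → Filter.Tendsto (lnphi φ) (nhdsWithin 0 (Set.Ioi 0)) Filter.atBot) :=
  stmt5_general φ hpos hmono hcont δ hδ
end

section
/- Let N, N' ∈ (-∞,0) ∪ [1,∞] and set m = (N-1)/N, m' = (N'-1)/N' (with m = 1 when N = ∞). If m < m', then DC_{N'} ⊂ DC_N; i.e., every continuous convex function u:[0,∞)→ℝ with u(0)=0 whose associated ψ_{N'} is convex also has ψ_N convex. -/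
/-!
Put `N = 1/(1-m)`. For `r > 0`, `ψ_N(r)` is the slope `u(x)/x` of `u` at `x = r^{-N}`, which is
monotone in `x` because `u` is convex with `u 0 = 0`; hence `ψ_N` is antitone for `N > 0`,
monotone for `N < 0`, and `ψ_∞` is antitone. Since `ψ_N(r) = ψ_{N'}(r^{N/N'})`,
`ψ_N(r) = ψ_∞(N log r)` and `ψ_∞(s) = ψ_{N'}(exp (s/N'))`, the function to be shown convex is a
convex `ψ` composed with a power, a logarithm or an exponential, and `m < m'` is exactly what makes
this inner function concave where `ψ` is antitone (`N' > 0` and `0 < N/N' < 1`, or `m' = 1`) and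
convex where `ψ` is monotone (`N' < 0` and `N/N' ∉ (0,1)`, or `m = 1`).
-/

open Set

noncomputable def psiN (N : ℝ) (u : ℝ → ℝ) (r : ℝ) : ℝ := r ^ N * u (r ^ (-N))

noncomputable def psiInf (u : ℝ → ℝ) (r : ℝ) : ℝ := Real.exp r * u (Real.exp (-r))

/-- Membership in the displacement convexity class `DC_N`, parametrized by
`m = (N-1)/N ∈ [0,∞)` (so `N = 1/(1-m)`, with `m = 1` corresponding to `N = ∞`):
`u : [0,∞) → ℝ` continuous, convex, `u(0) = 0`, and `ψ_N` convex. -/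
def memDC (m : ℝ) (u : ℝ → ℝ) : Prop :=
  ContinuousOn u (Set.Ici 0) ∧ ConvexOn ℝ (Set.Ici 0) u ∧ u 0 = 0 ∧
    (if m = 1 then ConvexOn ℝ Set.univ (psiInf u)
      else ConvexOn ℝ (Set.Ioi 0) (psiN (1 / (1 - m)) u))

open Real

section Composition

variable {𝕜 E β γ : Type*} [Semiring 𝕜] [PartialOrder 𝕜] [AddCommMonoid E] [SMul 𝕜 E]
  [AddCommMonoid β] [PartialOrder β] [SMul 𝕜 β] [AddCommMonoid γ] [PartialOrder γ] [SMul 𝕜 γ]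
  {s : Set E} {t : Set β} {f : E → β} {g : β → γ}

theorem ConvexOn.comp_of_mapsTo (hg : ConvexOn 𝕜 t g) (hf : ConvexOn 𝕜 s f)
    (hg' : MonotoneOn g t) (hst : MapsTo f s t) : ConvexOn 𝕜 s (g ∘ f) :=
  ⟨hf.1, fun _ hx _ hy _ _ ha hb hab =>
    (hg' (hst (hf.1 hx hy ha hb hab)) (hg.1 (hst hx) (hst hy) ha hb hab)
      (hf.2 hx hy ha hb hab)).trans (hg.2 (hst hx) (hst hy) ha hb hab)⟩

theorem ConvexOn.comp_concaveOn_of_mapsTo (hg : ConvexOn 𝕜 t g) (hf : ConcaveOn 𝕜 s f)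
    (hg' : AntitoneOn g t) (hst : MapsTo f s t) : ConvexOn 𝕜 s (g ∘ f) :=
  ⟨hf.1, fun _ hx _ hy _ _ ha hb hab =>
    (hg' (hg.1 (hst hx) (hst hy) ha hb hab) (hst (hf.1 hx hy ha hb hab))
      (hf.2 hx hy ha hb hab)).trans (hg.2 (hst hx) (hst hy) ha hb hab)⟩

end Composition

theorem convexOn_rpow_Ioi_of_nonpos {p : ℝ} (hp : p ≤ 0) :
    ConvexOn ℝ (Ioi 0) fun x : ℝ ↦ x ^ p := by
  have hlog : ConvexOn ℝ (Ioi 0) fun x ↦ log x * p :=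
    (strictConcaveOn_log_Ioi.concaveOn.smul (neg_nonneg.2 hp)).neg.congr fun x _ ↦ by
      simp only [Pi.neg_apply, smul_eq_mul]; ring
  exact (convexOn_exp.comp_of_mapsTo hlog (exp_monotone.monotoneOn _) (mapsTo_univ _ _)).congr
    fun x hx ↦ (rpow_def_of_pos hx p).symm

theorem convexOn_rpow_Ioi {p : ℝ} (hp : p ≤ 0 ∨ 1 ≤ p) :
    ConvexOn ℝ (Ioi 0) fun x : ℝ ↦ x ^ p := by
  rcases hp with hp | hp
  · exact convexOn_rpow_Ioi_of_nonpos hp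
  · exact (convexOn_rpow hp).subset Ioi_subset_Ici_self (convex_Ioi 0)

section DC

variable {u : ℝ → ℝ}

theorem psiN_eq_slope (N : ℝ) (h0 : u 0 = 0) {r : ℝ} (hr : 0 < r) :
    psiN N u r = slope u 0 (r ^ (-N)) := by
  rw [psiN, slope_def_field, h0, sub_zero, sub_zero, rpow_neg hr.le]
  field_simp

theorem psiInf_eq_slope (h0 : u 0 = 0) (s : ℝ) : psiInf u s = slope u 0 (exp (-s)) := by
  rw [psiInf, slope_def_field, h0, sub_zero, sub_zero, exp_neg]
  field_simp

theorem psiN_rpow_div {N N' r : ℝ} (hN' : N' ≠ 0) (hr : 0 < r) :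
    psiN N' u (r ^ (N / N')) = psiN N u r := by
  rw [psiN, psiN, ← rpow_mul hr.le, ← rpow_mul hr.le, div_mul_cancel₀ _ hN',
    show N / N' * -N' = -N by field_simp]

theorem psiInf_mul_log (N : ℝ) {r : ℝ} (hr : 0 < r) :
    psiInf u (N * log r) = psiN N u r := by
  rw [psiN, psiInf, rpow_def_of_pos hr, rpow_def_of_pos hr, mul_comm N, ← mul_neg]

theorem psiN_exp_inv_mul {N : ℝ} (hN : N ≠ 0) (s : ℝ) :
    psiN N u (exp (N⁻¹ * s)) = psiInf u s := by
  rw [psiN, psiInf, ← exp_mul, ← exp_mul, show N⁻¹ * s * N = s by field_simp,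
    show N⁻¹ * s * -N = -s by field_simp]

theorem monotoneOn_slope_zero (hu : ConvexOn ℝ (Ici 0) u) : MonotoneOn (slope u 0) (Ioi 0) :=
  (hu.slope_mono self_mem_Ici).mono fun _ hx ↦ ⟨mem_Ici.2 (le_of_lt hx), hx.ne'⟩

theorem antitoneOn_psiN (hu : ConvexOn ℝ (Ici 0) u) (h0 : u 0 = 0) {N : ℝ} (hN : 0 ≤ N) :
    AntitoneOn (psiN N u) (Ioi 0) := by
  intro x hx y hy hxy
  rw [psiN_eq_slope N h0 hx, psiN_eq_slope N h0 hy]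
  exact monotoneOn_slope_zero hu (rpow_pos_of_pos hy _) (rpow_pos_of_pos hx _)
    (rpow_le_rpow_of_nonpos hx hxy (neg_nonpos.2 hN))

theorem monotoneOn_psiN (hu : ConvexOn ℝ (Ici 0) u) (h0 : u 0 = 0) {N : ℝ} (hN : N ≤ 0) :
    MonotoneOn (psiN N u) (Ioi 0) := by
  intro x hx y hy hxy
  rw [psiN_eq_slope N h0 hx, psiN_eq_slope N h0 hy]
  exact monotoneOn_slope_zero hu (rpow_pos_of_pos hx _) (rpow_pos_of_pos hy _)
    (rpow_le_rpow hx.le hxy (neg_nonneg.2 hN))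

theorem antitone_psiInf (hu : ConvexOn ℝ (Ici 0) u) (h0 : u 0 = 0) : Antitone (psiInf u) := by
  intro x y hxy
  rw [psiInf_eq_slope h0, psiInf_eq_slope h0]
  exact monotoneOn_slope_zero hu (exp_pos _) (exp_pos _) (exp_le_exp.2 (neg_le_neg hxy))

theorem convexOn_psiN_of_pos (hu : ConvexOn ℝ (Ici 0) u) (h0 : u 0 = 0) {N N' : ℝ}
    (hN' : 0 < N') (hα₀ : 0 ≤ N / N') (hα₁ : N / N' ≤ 1)
    (h : ConvexOn ℝ (Ioi 0) (psiN N' u)) : ConvexOn ℝ (Ioi 0) (psiN N u) :=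
  (h.comp_concaveOn_of_mapsTo ((concaveOn_rpow hα₀ hα₁).subset Ioi_subset_Ici_self (convex_Ioi 0))
    (antitoneOn_psiN hu h0 hN'.le) fun _ hr ↦ rpow_pos_of_pos hr _).congr
    fun _ hr ↦ psiN_rpow_div hN'.ne' hr

theorem convexOn_psiN_of_neg (hu : ConvexOn ℝ (Ici 0) u) (h0 : u 0 = 0) {N N' : ℝ}
    (hN' : N' < 0) (hα : N / N' ≤ 0 ∨ 1 ≤ N / N')
    (h : ConvexOn ℝ (Ioi 0) (psiN N' u)) : ConvexOn ℝ (Ioi 0) (psiN N u) :=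
  (h.comp_of_mapsTo (convexOn_rpow_Ioi hα) (monotoneOn_psiN hu h0 hN'.le)
    fun _ hr ↦ rpow_pos_of_pos hr _).congr fun _ hr ↦ psiN_rpow_div hN'.ne hr

theorem convexOn_psiN_of_psiInf (hu : ConvexOn ℝ (Ici 0) u) (h0 : u 0 = 0) {N : ℝ}
    (hN : 0 ≤ N) (h : ConvexOn ℝ univ (psiInf u)) : ConvexOn ℝ (Ioi 0) (psiN N u) :=
  (h.comp_concaveOn_of_mapsTo (strictConcaveOn_log_Ioi.concaveOn.smul hN)
    ((antitone_psiInf hu h0).antitoneOn _) (mapsTo_univ _ _)).congr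
    fun _ hr ↦ psiInf_mul_log N hr

theorem convexOn_psiInf_of_psiN (hu : ConvexOn ℝ (Ici 0) u) (h0 : u 0 = 0) {N : ℝ}
    (hN : N < 0) (h : ConvexOn ℝ (Ioi 0) (psiN N u)) : ConvexOn ℝ univ (psiInf u) :=
  (h.comp_of_mapsTo (convexOn_exp.comp_linearMap (LinearMap.mul ℝ ℝ N⁻¹))
    (monotoneOn_psiN hu h0 hN.le) fun _ _ ↦ exp_pos _).congr
    fun s _ ↦ psiN_exp_inv_mul hN.ne s

theorem convexOn_psiN_of_lt (hu : ConvexOn ℝ (Ici 0) u) (h0 : u 0 = 0) {m m' : ℝ}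
    (hm : m ≠ 1) (hm' : m' ≠ 1) (hmm : m < m')
    (h : ConvexOn ℝ (Ioi 0) (psiN (1 / (1 - m')) u)) :
    ConvexOn ℝ (Ioi 0) (psiN (1 / (1 - m)) u) := by
  have hα : 1 / (1 - m) / (1 / (1 - m')) = (1 - m') / (1 - m) := by
    rw [div_div_div_comm, div_one, one_div_div]
  rcases lt_or_gt_of_ne hm' with hm'1 | hm'1
  · have h1m : 0 < 1 - m := by linarith
    have h1m' : 0 < 1 - m' := by linarith
    refine convexOn_psiN_of_pos hu h0 (one_div_pos.2 h1m') ?_ ?_ h <;> rw [hα]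
    · positivity
    · exact (div_le_one h1m).2 (by linarith)
  · have h1m' : 1 - m' < 0 := by linarith
    refine convexOn_psiN_of_neg hu h0 (one_div_neg.2 h1m') ?_ h
    rw [hα]
    rcases lt_or_gt_of_ne hm with hm1 | hm1
    · exact Or.inl (div_nonpos_of_nonpos_of_nonneg h1m'.le (by linarith))
    · exact Or.inr ((le_div_iff_of_neg (by linarith)).2 (by linarith))

end DC

theorem stmt7_general (m m' : ℝ) (hmm : m < m') (u : ℝ → ℝ)
    (h : memDC m' u) : memDC m u := by
  obtain ⟨hc, hu, h0, hψ⟩ := h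
  refine ⟨hc, hu, h0, ?_⟩
  by_cases hm : m = 1
  · have hm' : m' ≠ 1 := by linarith
    rw [if_neg hm'] at hψ
    rw [if_pos hm]
    exact convexOn_psiInf_of_psiN hu h0 (one_div_neg.2 (by linarith)) hψ
  rw [if_neg hm]
  by_cases hm' : m' = 1
  · rw [if_pos hm'] at hψ
    exact convexOn_psiN_of_psiInf hu h0 (one_div_nonneg.2 (by linarith)) hψ
  rw [if_neg hm'] at hψ
  exact convexOn_psiN_of_lt hu h0 hm hm' hmm hψ

/-- Monotonicity of the displacement convexity classes in `m = (N-1)/N`: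
if `0 ≤ m < m'` then `DC_{N'} ⊂ DC_N`. -/
theorem stmt7 (m m' : ℝ) (hm : 0 ≤ m) (hmm : m < m') (u : ℝ → ℝ)
    (h : memDC m' u) : memDC m u :=
  stmt7_general m m' hmm u h
end

section
/- Let φ:(0,∞)→(0,∞) be non-decreasing, positive, continuous, satisfying the integrability condition ensuring u_φ is well-defined. For N ∈ (-∞,0) ∪ (1,∞], the function ψ_N(r) = r^N u_φ(r^{-N}) (or e^r u_φ(e^{-r}) when N=∞) is convex if and only if for all t > 0: ∫₀^t s/φ(s) ds ≤ (N/(N-1)) · t²/φ(t), where N/(N-1) := 1 for N = ∞. -/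
open Set MeasureTheory Filter

/-- `u_φ(r) = ∫₀^r ln_φ(t) dt`. -/
noncomputable def uphi (φ : ℝ → ℝ) (r : ℝ) : ℝ := ∫ t in (0:ℝ)..r, lnphi φ t

/-! With `G(t) = ∫₀^t s/φ(s) ds`, the identity `u_φ(t) = t·ln_φ(t) - G(t)` holds because
both sides have derivative `ln_φ` on `(0,∞)` and tend to `0` at `0⁺`; the only delicate limit
is `t·ln_φ(t) = -∫_t^1 (t/s)·(s/φ(s)) ds → 0`, which is dominated convergence with majorant
`s/φ(s)`.
The identity gives `ψ_N'(r) = -N r^{N-1} G(r^{-N})` and then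
`ψ_N''(r) = N(N-1) r^{N-2} (N/(N-1) · x²/φ(x) - G(x))` at `x = r^{-N}`. As `N(N-1) > 0` and
`r ↦ r^{-N}` is a bijection of `(0,∞)`, convexity (`ψ_N'' ≥ 0`) is exactly the inequality;
the case `N = ∞` is the same computation with `x = e^{-r}`. -/

open Real Topology

noncomputable def Gphi (φ : ℝ → ℝ) (t : ℝ) : ℝ := ∫ s in (0:ℝ)..t, s / φ s

lemma hasDerivAt_integral_of_continuousOn_Ioi {f : ℝ → ℝ} {a t : ℝ}
    (hf : ContinuousOn f (Ioi 0)) (hint : IntervalIntegrable f volume a t) (ht : 0 < t) :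
    HasDerivAt (fun x => ∫ s in a..x, f s) (f t) t :=
  intervalIntegral.integral_hasDerivAt_right hint
    (hf.stronglyMeasurableAtFilter isOpen_Ioi t ht) (hf.continuousAt (Ioi_mem_nhds ht))

lemma tendsto_integral_nhdsGT_zero {f : ℝ → ℝ} (hf : IntervalIntegrable f volume 0 1) :
    Tendsto (fun t => ∫ s in (0:ℝ)..t, f s) (𝓝[>] 0) (𝓝 0) := by
  have hc := intervalIntegral.continuousOn_primitive_interval' hf left_mem_uIcc
  have h := (hc 0 left_mem_uIcc).tendsto
  rw [intervalIntegral.integral_same, uIcc_of_le zero_le_one] at h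
  exact h.mono_left (nhdsWithin_le_iff.mpr (mem_of_superset (Ioo_mem_nhdsGT one_pos)
    Ioo_subset_Icc_self))

lemma tendsto_integral_mul_div_nhdsGT_zero {g : ℝ → ℝ} (hg : IntegrableOn g (Ioc 0 1)) :
    Tendsto (fun t => ∫ s in t..1, t / s * g s) (𝓝[>] 0) (𝓝 0) := by
  set F : ℝ → ℝ → ℝ := fun t => (Ioc t 1).indicator fun s => t / s * g s
  have hF : ∀ t ∈ Ioo (0:ℝ) 1, ∫ s in Ioc 0 1, F t s = ∫ s in t..1, t / s * g s := by
    intro t ht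
    rw [intervalIntegral.integral_of_le ht.2.le, setIntegral_indicator measurableSet_Ioc,
      Ioc_inter_Ioc, max_eq_right ht.1.le, min_self]
  have hmeas : ∀ t, AEStronglyMeasurable (F t) (volume.restrict (Ioc 0 1)) := fun t =>
    ((measurable_const.div measurable_id).aestronglyMeasurable.mul
      hg.aestronglyMeasurable).indicator measurableSet_Ioc
  have hbound : ∀ t > 0, ∀ s, ‖F t s‖ ≤ ‖g s‖ := by
    intro t ht s
    by_cases hs : s ∈ Ioc t 1
    · rw [show F t s = t / s * g s from indicator_of_mem hs _, norm_mul]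
      refine mul_le_of_le_one_left (norm_nonneg _) ?_
      rw [Real.norm_of_nonneg (div_nonneg ht.le (ht.trans hs.1).le), div_le_one (ht.trans hs.1)]
      exact hs.1.le
    · rw [show F t s = 0 from indicator_of_notMem hs _, norm_zero]
      exact norm_nonneg _
  have hlim : ∀ s ∈ Ioc (0:ℝ) 1, Tendsto (fun t => F t s) (𝓝[>] 0) (𝓝 0) := by
    intro s hs
    have hlin : Tendsto (fun t => t / s * g s) (𝓝[>] 0) (𝓝 0) := by
      have := ((continuous_id.div_const s).mul_const (g s)).tendsto 0
      simp only [id, zero_div, zero_mul] at this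
      exact this.mono_left nhdsWithin_le_nhds
    exact hlin.congr' (eventuallyEq_of_mem (Ioo_mem_nhdsGT hs.1) fun t ht =>
      (indicator_of_mem (show s ∈ Ioc t 1 from ⟨ht.2, hs.2⟩) _).symm)
  have hDCT := tendsto_integral_filter_of_dominated_convergence (l := 𝓝[>] (0:ℝ))
    (f := fun _ => (0:ℝ)) (fun s => ‖g s‖) (Eventually.of_forall hmeas)
    (eventually_mem_nhdsWithin.mono fun t ht => Eventually.of_forall (hbound t ht)) hg.norm
    (ae_restrict_of_forall_mem measurableSet_Ioc hlim)
  rw [integral_zero] at hDCT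
  exact hDCT.congr' (eventuallyEq_of_mem (Ioo_mem_nhdsGT one_pos) hF)

lemma continuousOn_div_phi {φ : ℝ → ℝ} (hpos : ∀ s > (0:ℝ), 0 < φ s)
    (hcont : ContinuousOn φ (Ioi 0)) {f : ℝ → ℝ} (hf : ContinuousOn f (Ioi 0)) :
    ContinuousOn (fun s => f s / φ s) (Ioi 0) :=
  hf.div hcont fun s hs => (hpos s hs).ne'

lemma hasDerivAt_lnphi {φ : ℝ → ℝ} (hpos : ∀ s > (0:ℝ), 0 < φ s)
    (hcont : ContinuousOn φ (Ioi 0)) {t : ℝ} (ht : 0 < t) :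
    HasDerivAt (lnphi φ) (1 / φ t) t :=
  have hc := continuousOn_div_phi hpos hcont continuousOn_const
  hasDerivAt_integral_of_continuousOn_Ioi hc
    ((hc.mono fun _ hs => (lt_min one_pos ht).trans_le hs.1).intervalIntegrable) ht

lemma hasDerivAt_Gphi {φ : ℝ → ℝ} (hpos : ∀ s > (0:ℝ), 0 < φ s)
    (hcont : ContinuousOn φ (Ioi 0))
    (hint : ∀ t > (0:ℝ), IntervalIntegrable (fun s => s / φ s) volume 0 t)
    {t : ℝ} (ht : 0 < t) : HasDerivAt (Gphi φ) (t / φ t) t :=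
  hasDerivAt_integral_of_continuousOn_Ioi (continuousOn_div_phi hpos hcont continuousOn_id)
    (hint t ht) ht

lemma hasDerivAt_uphi {φ : ℝ → ℝ} (hpos : ∀ s > (0:ℝ), 0 < φ s)
    (hcont : ContinuousOn φ (Ioi 0))
    (huint : ∀ r ≥ (0:ℝ), IntervalIntegrable (lnphi φ) volume 0 r)
    {r : ℝ} (hr : 0 < r) : HasDerivAt (uphi φ) (lnphi φ r) r :=
  hasDerivAt_integral_of_continuousOn_Ioi
    (fun _ hx => (hasDerivAt_lnphi hpos hcont hx).continuousAt.continuousWithinAt)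
    (huint r hr.le) hr

lemma mul_lnphi_eq_neg_integral {φ : ℝ → ℝ} {t : ℝ} (ht : 0 < t) :
    t * lnphi φ t = -∫ s in t..1, t / s * (s / φ s) := by
  rw [lnphi, intervalIntegral.integral_symm, mul_neg, ← intervalIntegral.integral_const_mul]
  congr 1
  refine intervalIntegral.integral_congr fun s hs => ?_
  have hs0 : s ≠ 0 := (lt_of_lt_of_le (lt_min ht one_pos) hs.1).ne'
  field_simp

lemma tendsto_mul_lnphi_nhdsGT_zero {φ : ℝ → ℝ}
    (hint : ∀ t > (0:ℝ), IntervalIntegrable (fun s => s / φ s) volume 0 t) :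
    Tendsto (fun t => t * lnphi φ t) (𝓝[>] 0) (𝓝 0) := by
  have h := (tendsto_integral_mul_div_nhdsGT_zero
    ((intervalIntegrable_iff_integrableOn_Ioc_of_le zero_le_one).mp (hint 1 one_pos))).neg
  rw [neg_zero] at h
  exact h.congr' (eventuallyEq_of_mem self_mem_nhdsWithin fun t ht =>
    (mul_lnphi_eq_neg_integral ht).symm)

lemma uphi_eq_mul_lnphi_sub_Gphi {φ : ℝ → ℝ} (hpos : ∀ s > (0:ℝ), 0 < φ s)
    (hcont : ContinuousOn φ (Ioi 0))
    (hint : ∀ t > (0:ℝ), IntervalIntegrable (fun s => s / φ s) volume 0 t)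
    (huint : ∀ r ≥ (0:ℝ), IntervalIntegrable (lnphi φ) volume 0 r)
    {t : ℝ} (ht : 0 < t) :
    uphi φ t = t * lnphi φ t - Gphi φ t := by
  set H : ℝ → ℝ := fun x => uphi φ x - x * lnphi φ x + Gphi φ x
  have hH : ∀ x > 0, HasDerivAt H 0 x := by
    intro x hx
    refine (((hasDerivAt_uphi hpos hcont huint hx).sub
      ((hasDerivAt_id x).mul (hasDerivAt_lnphi hpos hcont hx))).add
      (hasDerivAt_Gphi hpos hcont hint hx)).congr_deriv ?_
    rw [id, one_mul, mul_one_div]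
    ring
  have hconst : ∀ x > 0, H x = H t := fun x hx =>
    isOpen_Ioi.is_const_of_deriv_eq_zero isPreconnected_Ioi
      (fun y hy => (hH y hy).differentiableAt.differentiableWithinAt)
      (fun y hy => (hH y hy).deriv) hx ht
  have hlim : Tendsto H (𝓝[>] 0) (𝓝 0) := by
    have h := ((tendsto_integral_nhdsGT_zero (huint 1 zero_le_one)).sub
      (tendsto_mul_lnphi_nhdsGT_zero hint)).add (tendsto_integral_nhdsGT_zero (hint 1 one_pos))
    rwa [sub_zero, add_zero] at h
  have hHt : H t = 0 :=
    tendsto_nhds_unique (f := H) (l := 𝓝[>] 0) (tendsto_const_nhds.congr'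
      (eventuallyEq_of_mem self_mem_nhdsWithin fun x hx => (hconst x hx).symm)) hlim
  simp only [H] at hHt
  linarith

lemma convexOn_iff_forall_nonneg_of_hasDerivAt {s : Set ℝ} (hs : Convex ℝ s) (hso : IsOpen s)
    {f f' f'' : ℝ → ℝ} (hf' : ∀ x ∈ s, HasDerivAt f (f' x) x)
    (hf'' : ∀ x ∈ s, HasDerivAt f' (f'' x) x) :
    ConvexOn ℝ s f ↔ ∀ x ∈ s, 0 ≤ f'' x := by
  refine ⟨fun hc x hx => ?_, fun h => ?_⟩
  · have hmono : MonotoneOn f' s := fun a ha b hb hab => by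
      simpa only [(hf' a ha).deriv, (hf' b hb).deriv] using
        hc.monotoneOn_deriv (fun y hy => (hf' y hy).differentiableAt) ha hb hab
    exact (hf'' x hx).hasDerivWithinAt.nonneg_of_monotoneOn (hso.preperfect x hx) hmono
  · refine convexOn_of_hasDerivWithinAt2_nonneg (f' := f') (f'' := f'') hs
      (fun x hx => (hf' x hx).continuousAt.continuousWithinAt) ?_ ?_ ?_ <;> rw [hso.interior_eq]
    exacts [fun x hx => (hf' x hx).hasDerivWithinAt, fun x hx => (hf'' x hx).hasDerivWithinAt, h]

lemma forall_pos_rpow_neg_iff {N : ℝ} (hN : N ≠ 0) {P : ℝ → Prop} :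
    (∀ r > 0, P (r ^ (-N))) ↔ ∀ t > 0, P t := by
  refine ⟨fun h t ht => ?_, fun h r hr => h _ (rpow_pos_of_pos hr _)⟩
  have := h (t ^ (-N⁻¹)) (rpow_pos_of_pos ht _)
  rwa [← rpow_mul ht.le, neg_mul_neg, inv_mul_cancel₀ hN, rpow_one] at this

lemma forall_exp_neg_iff {P : ℝ → Prop} : (∀ r, P (exp (-r))) ↔ ∀ t > 0, P t := by
  refine ⟨fun h t ht => ?_, fun h r => h _ (exp_pos _)⟩
  simpa [exp_log ht] using h (-log t)

lemma hasDerivAt_psiN {φ : ℝ → ℝ} (hpos : ∀ s > (0:ℝ), 0 < φ s)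
    (hcont : ContinuousOn φ (Ioi 0))
    (hint : ∀ t > (0:ℝ), IntervalIntegrable (fun s => s / φ s) volume 0 t)
    (huint : ∀ r ≥ (0:ℝ), IntervalIntegrable (lnphi φ) volume 0 r)
    (N : ℝ) {r : ℝ} (hr : 0 < r) :
    HasDerivAt (psiN N (uphi φ)) (-N * r ^ (N - 1) * Gphi φ (r ^ (-N))) r := by
  have hx : 0 < r ^ (-N) := rpow_pos_of_pos hr _
  have hu := (hasDerivAt_uphi hpos hcont huint hx).comp r
    (hasDerivAt_rpow_const (p := -N) (Or.inl hr.ne'))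
  refine ((hasDerivAt_rpow_const (p := N) (Or.inl hr.ne')).mul hu).congr_deriv ?_
  rw [Function.comp_apply, uphi_eq_mul_lnphi_sub_Gphi hpos hcont hint huint hx]
  have e1 : r ^ (N - 1) * r ^ (-N) = r ^ (-1 : ℝ) := by rw [← rpow_add hr]; ring_nf
  have e2 : r ^ N * r ^ (-N - 1) = r ^ (-1 : ℝ) := by rw [← rpow_add hr]; ring_nf
  linear_combination (N * lnphi φ (r ^ (-N))) * (e1 - e2)

lemma hasDerivAt_deriv_psiN {φ : ℝ → ℝ} (hpos : ∀ s > (0:ℝ), 0 < φ s)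
    (hcont : ContinuousOn φ (Ioi 0))
    (hint : ∀ t > (0:ℝ), IntervalIntegrable (fun s => s / φ s) volume 0 t)
    {N : ℝ} (hN : N ≠ 1) {r : ℝ} (hr : 0 < r) :
    HasDerivAt (fun r => -N * r ^ (N - 1) * Gphi φ (r ^ (-N)))
      (N * (N - 1) * r ^ (N - 2) *
        (N / (N - 1) * ((r ^ (-N)) ^ 2 / φ (r ^ (-N))) - Gphi φ (r ^ (-N)))) r := by
  have hx : 0 < r ^ (-N) := rpow_pos_of_pos hr _
  have hG := (hasDerivAt_Gphi hpos hcont hint hx).comp r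
    (hasDerivAt_rpow_const (p := -N) (Or.inl hr.ne'))
  refine (((hasDerivAt_rpow_const (p := N - 1) (Or.inl hr.ne')).const_mul (-N)).mul
    hG).congr_deriv ?_
  have e1 : r ^ (N - 1) * r ^ (-N - 1) = r ^ (-2 : ℝ) := by rw [← rpow_add hr]; ring_nf
  have e2 : r ^ (N - 2) * (r ^ (-N)) ^ 2 = r ^ (-2 : ℝ) * r ^ (-N) := by
    rw [sq, ← rpow_add hr, ← rpow_add hr, ← rpow_add hr]; ring_nf
  have e3 : N * (N - 1) * (N / (N - 1)) = N ^ 2 := by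
    field_simp [sub_ne_zero.mpr hN]
  rw [Function.comp_apply, show N - 1 - 1 = N - 2 by ring]
  linear_combination (N ^ 2 * r ^ (-N) / φ (r ^ (-N))) * e1
    - (N ^ 2 / φ (r ^ (-N))) * e2 - (r ^ (N - 2) * (r ^ (-N)) ^ 2 / φ (r ^ (-N))) * e3

lemma hasDerivAt_psiInf {φ : ℝ → ℝ} (hpos : ∀ s > (0:ℝ), 0 < φ s)
    (hcont : ContinuousOn φ (Ioi 0))
    (hint : ∀ t > (0:ℝ), IntervalIntegrable (fun s => s / φ s) volume 0 t)
    (huint : ∀ r ≥ (0:ℝ), IntervalIntegrable (lnphi φ) volume 0 r) (r : ℝ) :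
    HasDerivAt (psiInf (uphi φ)) (-exp r * Gphi φ (exp (-r))) r := by
  have hx : 0 < exp (-r) := exp_pos _
  have hu := (hasDerivAt_uphi hpos hcont huint hx).comp r (hasDerivAt_neg r).exp
  refine ((hasDerivAt_exp r).mul hu).congr_deriv ?_
  rw [Function.comp_apply, uphi_eq_mul_lnphi_sub_Gphi hpos hcont hint huint hx]
  ring

lemma hasDerivAt_deriv_psiInf {φ : ℝ → ℝ} (hpos : ∀ s > (0:ℝ), 0 < φ s)
    (hcont : ContinuousOn φ (Ioi 0))
    (hint : ∀ t > (0:ℝ), IntervalIntegrable (fun s => s / φ s) volume 0 t) (r : ℝ) :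
    HasDerivAt (fun r => -exp r * Gphi φ (exp (-r)))
      (exp r * (exp (-r) ^ 2 / φ (exp (-r)) - Gphi φ (exp (-r)))) r := by
  have hG := (hasDerivAt_Gphi hpos hcont hint (exp_pos (-r))).comp r (hasDerivAt_neg r).exp
  refine ((hasDerivAt_exp r).neg.mul hG).congr_deriv ?_
  rw [Function.comp_apply, Pi.neg_apply]
  ring

theorem stmt8_general (φ : ℝ → ℝ)
    (hpos : ∀ s > (0:ℝ), 0 < φ s)
    (hcont : ContinuousOn φ (Ioi 0))
    (hint : ∀ t > (0:ℝ), IntervalIntegrable (fun s => s / φ s) MeasureTheory.volume 0 t)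
    (huint : ∀ r ≥ (0:ℝ), IntervalIntegrable (lnphi φ) MeasureTheory.volume 0 r) :
    (∀ N : ℝ, (N < 0 ∨ 1 < N) →
      (ConvexOn ℝ (Set.Ioi 0) (psiN N (uphi φ)) ↔
        ∀ t > (0:ℝ), (∫ s in (0:ℝ)..t, s / φ s) ≤ N / (N - 1) * (t ^ 2 / φ t))) ∧
    (ConvexOn ℝ Set.univ (psiInf (uphi φ)) ↔
      ∀ t > (0:ℝ), (∫ s in (0:ℝ)..t, s / φ s) ≤ t ^ 2 / φ t) := by
  refine ⟨fun N hN => ?_, ?_⟩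
  · have hNN : 0 < N * (N - 1) := by rcases hN with h | h <;> nlinarith
    have hN0 : N ≠ 0 := left_ne_zero_of_mul hNN.ne'
    have hN1 : N ≠ 1 := sub_ne_zero.mp (right_ne_zero_of_mul hNN.ne')
    rw [convexOn_iff_forall_nonneg_of_hasDerivAt (convex_Ioi 0) isOpen_Ioi
      (fun r hr => hasDerivAt_psiN hpos hcont hint huint N hr)
      (fun r hr => hasDerivAt_deriv_psiN hpos hcont hint hN1 hr),
      ← forall_pos_rpow_neg_iff hN0]
    refine forall₂_congr fun r hr => ?_
    rw [mul_nonneg_iff_of_pos_left (mul_pos hNN (rpow_pos_of_pos hr _)), sub_nonneg, Gphi]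
  · rw [convexOn_iff_forall_nonneg_of_hasDerivAt convex_univ isOpen_univ
      (fun r _ => hasDerivAt_psiInf hpos hcont hint huint r)
      (fun r _ => hasDerivAt_deriv_psiInf hpos hcont hint r), ← forall_exp_neg_iff]
    refine forall_congr' fun r => ?_
    rw [imp_iff_right (mem_univ r), mul_nonneg_iff_of_pos_left (exp_pos r), sub_nonneg, Gphi]

/-- For `N ∈ (-∞,0) ∪ (1,∞]`, the function `ψ_N` associated with `u_φ` is convex
if and only if `∫₀^t s/φ(s) ds ≤ (N/(N-1)) · t²/φ(t)` for all `t > 0`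
(with `N/(N-1) := 1` for `N = ∞`). -/
theorem stmt8 (φ : ℝ → ℝ)
    (hpos : ∀ s > (0:ℝ), 0 < φ s)
    (hmono : MonotoneOn φ (Ioi 0))
    (hcont : ContinuousOn φ (Ioi 0))
    (hint : ∀ t > (0:ℝ), IntervalIntegrable (fun s => s / φ s) MeasureTheory.volume 0 t)
    (huint : ∀ r ≥ (0:ℝ), IntervalIntegrable (lnphi φ) MeasureTheory.volume 0 r) :
    (∀ N : ℝ, (N < 0 ∨ 1 < N) →
      (ConvexOn ℝ (Set.Ioi 0) (psiN N (uphi φ)) ↔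
        ∀ t > (0:ℝ), (∫ s in (0:ℝ)..t, s / φ s) ≤ N / (N - 1) * (t ^ 2 / φ t))) ∧
    (ConvexOn ℝ Set.univ (psiInf (uphi φ)) ↔
      ∀ t > (0:ℝ), (∫ s in (0:ℝ)..t, s / φ s) ≤ t ^ 2 / φ t) :=
  stmt8_general φ hpos hcont hint huint
end

section
/- Given 0 < m ≤ m' < 1 with m + m' > 1, set β = 1 + (1-m')/(1-m) ∈ (1,2]. Then βm' > 1, and for any a, r > 0: e_m( -(ar - 1/√m')² + 1/m' ) ≤ e_m(β) · e_m( -(1 - 1/(βm')) · a²r²/(m+m'-1) ), where e_m(τ) = [1+(m-1)τ]₊^{1/(m-1)}. -/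
/-!
For `m < 1` and `1 + (m - 1) τ > 0`, `e_m(τ) = (1 + (m - 1) τ)^{1/(m-1)}` with a negative exponent,
so `e_m(ρ) ≤ e_m(σ) e_m(τ)` follows from the reverse inequality between the bases,
`(1 + (m - 1) σ)(1 + (m - 1) τ) ≤ 1 + (m - 1) ρ`. Since `(1 - m) β = 2 - m - m'`, the base of
`e_m(β)` is `m + m' - 1`, and with `x = a r` the required base inequality reduces to the AM-GM bound
`2 x / √m' ≤ β + x² / (β m')`, i.e. `(β √m' - x)² ≥ 0`.
-/

open ENNReal

theorem expm_of_lt_one {m τ : ℝ} (hm : m < 1) (hτ : 0 < 1 + (m - 1) * τ) :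
    expm m τ = ENNReal.ofReal ((1 + (m - 1) * τ) ^ (1 / (m - 1))) := by
  rw [expm, if_neg hm.ne, if_neg hm.not_gt, if_neg hτ.not_ge]

theorem expm_le_mul_of_lt_one {m ρ σ τ : ℝ} (hm : m < 1) (hσ : 0 < 1 + (m - 1) * σ)
    (hτ : 0 < 1 + (m - 1) * τ)
    (h : (1 + (m - 1) * σ) * (1 + (m - 1) * τ) ≤ 1 + (m - 1) * ρ) :
    expm m ρ ≤ expm m σ * expm m τ := by
  have hρ : 0 < 1 + (m - 1) * ρ := (mul_pos hσ hτ).trans_le h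
  rw [expm_of_lt_one hm hρ, expm_of_lt_one hm hσ, expm_of_lt_one hm hτ,
    ← ENNReal.ofReal_mul (by positivity), ← Real.mul_rpow hσ.le hτ.le]
  exact ENNReal.ofReal_le_ofReal <| Real.rpow_le_rpow_of_nonpos (mul_pos hσ hτ) h <|
    div_nonpos_of_nonneg_of_nonpos zero_le_one (by linarith)

theorem one_sub_mul_one_add_div {m m' : ℝ} (hm : m < 1) :
    (1 - m) * (1 + (1 - m') / (1 - m)) = 2 - m - m' := by
  field_simp [(sub_pos.2 hm).ne']
  ring

theorem one_lt_one_add_div_mul {m m' : ℝ} (hmm : m ≤ m') (hm' : m' < 1) (hsum : 1 < m + m') :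
    1 < (1 + (1 - m') / (1 - m)) * m' := by
  have hm : 0 < 1 - m := by linarith
  have h : (1 + (1 - m') / (1 - m)) * m' - 1 = (m + m' - 1) * (1 - m') / (1 - m) := by
    field_simp [hm.ne']
    ring
  have : 0 < (m + m' - 1) * (1 - m') / (1 - m) := div_pos (mul_pos (by linarith) (by linarith)) hm
  linarith

theorem two_mul_div_le_add_sq_div {β s : ℝ} (x : ℝ) (hβ : 0 < β) (hs : 0 < s) :
    2 * x / s ≤ β + x ^ 2 / (β * s ^ 2) := by
  have h : β + x ^ 2 / (β * s ^ 2) - 2 * x / s = (β * s - x) ^ 2 / (β * s ^ 2) := by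
    field_simp
    ring
  have : 0 ≤ (β * s - x) ^ 2 / (β * s ^ 2) := by positivity
  linarith

theorem one_add_sub_one_mul_neg_pos {m c D : ℝ} (x : ℝ) (hm : m ≤ 1) (hc : 0 ≤ c) (hD : 0 ≤ D) :
    0 < 1 + (m - 1) * (-c * x ^ 2 / D) := by
  have h : (m - 1) * (-c * x ^ 2 / D) = (1 - m) * c * x ^ 2 / D := by ring
  have : 0 ≤ (1 - m) * c * x ^ 2 / D := by
    have : 0 ≤ 1 - m := by linarith
    positivity
  linarith

theorem base_mul_base_le {m m' β : ℝ} (x : ℝ) (hm : m < 1) (hm' : 0 < m') (hβ : 0 < β)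
    (hmβ : (1 - m) * β = 2 - m - m') (hD : 0 < m + m' - 1) :
    (1 + (m - 1) * β) * (1 + (m - 1) * (-(1 - 1 / (β * m')) * x ^ 2 / (m + m' - 1))) ≤
      1 + (m - 1) * (-(x - 1 / Real.sqrt m') ^ 2 + 1 / m') := by
  have hs : 0 < Real.sqrt m' := Real.sqrt_pos.mpr hm'
  have hs2 : Real.sqrt m' ^ 2 = m' := Real.sq_sqrt hm'.le
  have hs2inv : (1 / Real.sqrt m') ^ 2 = 1 / m' := by rw [div_pow, one_pow, hs2]
  have amgm := mul_le_mul_of_nonneg_left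
    (two_mul_div_le_add_sq_div x hβ hs) (by linarith : 0 ≤ 1 - m)
  rw [hs2] at amgm
  have hβ' : 1 + (m - 1) * β = m + m' - 1 := by linarith
  have hlhs : (m + m' - 1) * (1 + (m - 1) * (-(1 - 1 / (β * m')) * x ^ 2 / (m + m' - 1)))
      = (m + m' - 1) + (1 - m) * x ^ 2 - (1 - m) * (x ^ 2 / (β * m')) := by
    field_simp
    ring
  have hrhs : 1 + (m - 1) * (-(x - 1 / Real.sqrt m') ^ 2 + 1 / m')
      = 1 + (1 - m) * x ^ 2 - (1 - m) * (2 * x / Real.sqrt m') := by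
    linear_combination (1 - m) * hs2inv
  rw [hβ', hlhs, hrhs]
  linarith

theorem stmt15_general (m m' : ℝ) (hmm : m ≤ m') (hm' : m' < 1)
    (hsum : 1 < m + m') :
    1 < 1 + (1 - m') / (1 - m) ∧ 1 + (1 - m') / (1 - m) ≤ 2 ∧
    1 < (1 + (1 - m') / (1 - m)) * m' ∧
    ∀ a r : ℝ, 0 < a → 0 < r →
      expm m (-(a * r - 1 / Real.sqrt m') ^ 2 + 1 / m') ≤
        expm m (1 + (1 - m') / (1 - m)) *
          expm m (-(1 - 1 / ((1 + (1 - m') / (1 - m)) * m')) *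
            (a ^ 2 * r ^ 2) / (m + m' - 1)) := by
  have hm : m < 1 := hmm.trans_lt hm'
  have hβm' := one_lt_one_add_div_mul hmm hm' hsum
  set β := 1 + (1 - m') / (1 - m)
  have hmβ : (1 - m) * β = 2 - m - m' := one_sub_mul_one_add_div hm
  have hβ1 : 1 < β := lt_add_of_pos_right 1 (div_pos (by linarith) (by linarith))
  have hβ2 : β ≤ 2 := by
    have := (div_le_one (sub_pos.2 hm)).2 (by linarith : 1 - m' ≤ 1 - m)
    linarith
  refine ⟨hβ1, hβ2, hβm', fun a r _ _ => ?_⟩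
  have hc : 0 ≤ 1 - 1 / (β * m') := by
    rw [sub_nonneg, div_le_one (by linarith)]
    exact hβm'.le
  rw [← mul_pow]
  exact expm_le_mul_of_lt_one hm (by linarith)
    (one_add_sub_one_mul_neg_pos (a * r) hm.le hc (by linarith))
    (base_mul_base_le (a * r) hm (by linarith) (by linarith) hmβ (by linarith))

/-- For `0 < m ≤ m' < 1` with `m + m' > 1` and `β = 1 + (1-m')/(1-m) ∈ (1,2]`:
`βm' > 1` and for all `a, r > 0`,
`e_m(-(ar - 1/√m')² + 1/m') ≤ e_m(β)·e_m(-(1 - 1/(βm'))·a²r²/(m+m'-1))`. -/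
theorem stmt15 (m m' : ℝ) (hm : 0 < m) (hmm : m ≤ m') (hm' : m' < 1)
    (hsum : 1 < m + m') :
    1 < 1 + (1 - m') / (1 - m) ∧ 1 + (1 - m') / (1 - m) ≤ 2 ∧
    1 < (1 + (1 - m') / (1 - m)) * m' ∧
    ∀ a r : ℝ, 0 < a → 0 < r →
      expm m (-(a * r - 1 / Real.sqrt m') ^ 2 + 1 / m') ≤
        expm m (1 + (1 - m') / (1 - m)) *
          expm m (-(1 - 1 / ((1 + (1 - m') / (1 - m)) * m')) *
            (a ^ 2 * r ^ 2) / (m + m' - 1)) :=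
  stmt15_general m m' hmm hm' hsum
end
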